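/- Let (X,Y) be a binary source pair with conditional Bhattacharyya parameter Z(X|Y) ∈ [0,1]. Then Z(X|Y) = 0 if and only if H(X|Y) = 0, and Z(X|Y) = 1 if and only if H(X|Y) = 1. -/

import Mathlib

/-- Conditional Shannon entropy (base 2) of a joint pmf `q x y`. -/
noncomputable def condEnt {α β : Type*} [Fintype α] (q : α → β → ℝ) : ℝ :=
  ∑' y : β, ∑ x : α, -(q x y * Real.logb 2 (q x y / ∑ x' : α, q x' y))

/-- Conditional source Bhattacharyya parameter `Z(X|Y) = 2 Σ_y √(q(0,y) q(1,y))`. -/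
noncomputable def bhat {β : Type*} (q : Bool → β → ℝ) : ℝ :=
  2 * ∑' y : β, Real.sqrt (q false y * q true y)

/-!
For each `y` put `a = q(1,y)`, `b = q(0,y)`. Both `H(X|Y)` and `Z(X|Y)` are sums over `y` of
nonnegative terms dominated by the marginal `a + b`: the entropy term is `(a + b) h₂(a / (a + b))`,
and `2√(ab) ≤ a + b` since the difference is `(√a - √b)²`. Each term vanishes exactly when
`ab = 0` and reaches `a + b` exactly when `a = b`. As the marginals sum to `1`, a sum of such terms
is `0` (resp. `1`) iff every term is, so `Z = 0` and `H = 0` both say that `X` is a function of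
`Y`, and `Z = 1` and `H = 1` both say that `X` is uniform given every `y`.
-/

open Real

theorem tsum_eq_tsum_iff_of_le {ι : Type*} {f g : ι → ℝ} (hfg : ∀ i, f i ≤ g i)
    (hf : Summable f) (hg : Summable g) : ∑' i, f i = ∑' i, g i ↔ ∀ i, f i = g i := by
  rw [eq_comm, ← sub_eq_zero, ← hg.tsum_sub hf, ← (hg.sub hf).hasSum_iff,
    hasSum_zero_iff_of_nonneg fun i ↦ sub_nonneg.2 (hfg i)]
  simp only [funext_iff, Pi.zero_apply, sub_eq_zero, eq_comm]

theorem tsum_eq_zero_iff_of_nonneg {ι : Type*} {f : ι → ℝ} (hf : ∀ i, 0 ≤ f i) (hs : Summable f) :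
    ∑' i, f i = 0 ↔ ∀ i, f i = 0 := by
  simpa [eq_comm] using tsum_eq_tsum_iff_of_le hf summable_zero hs

theorem add_sub_two_mul_sqrt_mul {a b : ℝ} (ha : 0 ≤ a) (hb : 0 ≤ b) :
    a + b - 2 * √(a * b) = (√a - √b) ^ 2 := by
  rw [sqrt_mul ha, sub_sq, sq_sqrt ha, sq_sqrt hb]; ring

theorem two_mul_sqrt_mul_le_add {a b : ℝ} (ha : 0 ≤ a) (hb : 0 ≤ b) : 2 * √(a * b) ≤ a + b := by
  rw [← sub_nonneg, add_sub_two_mul_sqrt_mul ha hb]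
  positivity

theorem two_mul_sqrt_mul_eq_add_iff {a b : ℝ} (ha : 0 ≤ a) (hb : 0 ≤ b) :
    2 * √(a * b) = a + b ↔ a = b := by
  rw [eq_comm, ← sub_eq_zero, add_sub_two_mul_sqrt_mul ha hb, sq_eq_zero_iff, sub_eq_zero,
    sqrt_inj ha hb]

noncomputable def pairEntropy (a b : ℝ) : ℝ :=
  -(a * logb 2 (a / (a + b))) + -(b * logb 2 (b / (a + b)))

namespace pairEntropy

variable {a b : ℝ}

theorem eq_mul_binEntropy (ha : 0 ≤ a) (hb : 0 ≤ b) :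
    pairEntropy a b = (a + b) * binEntropy (a / (a + b)) / log 2 := by
  rcases (add_nonneg ha hb).eq_or_lt' with hs | hs
  · obtain ⟨rfl, rfl⟩ : a = 0 ∧ b = 0 := ⟨by linarith, by linarith⟩
    simp [pairEntropy]
  have h1 : 1 - a / (a + b) = b / (a + b) := by field_simp; ring
  rw [binEntropy_eq_negMulLog_add_negMulLog_one_sub, h1, pairEntropy]
  simp only [negMulLog, logb]
  field_simp

theorem nonneg (ha : 0 ≤ a) (hb : 0 ≤ b) : 0 ≤ pairEntropy a b := by
  rw [eq_mul_binEntropy ha hb]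
  have hp : a / (a + b) ≤ 1 := div_le_one_of_le₀ (by linarith) (by positivity)
  have := binEntropy_nonneg (by positivity) hp
  positivity

theorem le_add (ha : 0 ≤ a) (hb : 0 ≤ b) : pairEntropy a b ≤ a + b := by
  rw [eq_mul_binEntropy ha hb, div_le_iff₀ (log_pos one_lt_two)]
  exact mul_le_mul_of_nonneg_left binEntropy_le_log_two (by positivity)

theorem eq_zero_iff (ha : 0 ≤ a) (hb : 0 ≤ b) : pairEntropy a b = 0 ↔ a * b = 0 := by
  rcases (add_nonneg ha hb).eq_or_lt' with hs | hs
  · obtain ⟨rfl, rfl⟩ : a = 0 ∧ b = 0 := ⟨by linarith, by linarith⟩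
    simp [pairEntropy]
  rw [eq_mul_binEntropy ha hb, div_eq_zero_iff, or_iff_left (log_pos one_lt_two).ne', mul_eq_zero,
    or_iff_right hs.ne', binEntropy_eq_zero, div_eq_zero_iff, or_iff_left hs.ne',
    div_eq_one_iff_eq hs.ne', left_eq_add, mul_eq_zero]

theorem eq_add_iff (ha : 0 ≤ a) (hb : 0 ≤ b) : pairEntropy a b = a + b ↔ a = b := by
  rcases (add_nonneg ha hb).eq_or_lt' with hs | hs
  · obtain ⟨rfl, rfl⟩ : a = 0 ∧ b = 0 := ⟨by linarith, by linarith⟩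
    simp [pairEntropy]
  rw [eq_mul_binEntropy ha hb, div_eq_iff (log_pos one_lt_two).ne', mul_right_inj' hs.ne',
    binEntropy_eq_log_two, div_eq_iff hs.ne']
  constructor <;> intro h <;> linarith

end pairEntropy

theorem HasSum.bool_fiberwise {β : Type*} {f : Bool → β → ℝ} {a : ℝ}
    (h : HasSum (fun z : Bool × β ↦ f z.1 z.2) a) : HasSum (fun y ↦ f true y + f false y) a :=
  ((Equiv.prodComm β Bool).hasSum_iff.mpr h).prod_fiberwise fun y ↦ by
    simpa [Fintype.sum_bool] using hasSum_fintype (f · y)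

section BinarySource

variable {β : Type*} {q : Bool → β → ℝ}

theorem condEnt_bool :
    condEnt q = ∑' y, pairEntropy (q true y) (q false y) := by
  simp only [condEnt, pairEntropy, Fintype.sum_bool]

theorem bhat_eq_tsum :
    bhat q = ∑' y, 2 * √(q true y * q false y) := by
  simp [bhat, tsum_mul_left, mul_comm]

theorem summable_pairEntropy (hq : ∀ x y, 0 ≤ q x y)
    (hY : Summable fun y ↦ q true y + q false y) :
    Summable fun y ↦ pairEntropy (q true y) (q false y) :=
  .of_nonneg_of_le (fun y ↦ pairEntropy.nonneg (hq _ y) (hq _ y))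
    (fun y ↦ pairEntropy.le_add (hq _ y) (hq _ y)) hY

theorem summable_two_mul_sqrt (hq : ∀ x y, 0 ≤ q x y)
    (hY : Summable fun y ↦ q true y + q false y) :
    Summable fun y ↦ 2 * √(q true y * q false y) :=
  .of_nonneg_of_le (fun y ↦ by positivity)
    (fun y ↦ two_mul_sqrt_mul_le_add (hq _ y) (hq _ y)) hY

theorem condEnt_eq_zero_iff (hq : ∀ x y, 0 ≤ q x y)
    (hY : Summable fun y ↦ q true y + q false y) :
    condEnt q = 0 ↔ ∀ y, q true y * q false y = 0 := by
  rw [condEnt_bool, tsum_eq_zero_iff_of_nonneg (fun y ↦ pairEntropy.nonneg (hq _ y) (hq _ y))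
    (summable_pairEntropy hq hY)]
  exact forall_congr' fun y ↦ pairEntropy.eq_zero_iff (hq _ y) (hq _ y)

theorem bhat_eq_zero_iff (hq : ∀ x y, 0 ≤ q x y)
    (hY : Summable fun y ↦ q true y + q false y) :
    bhat q = 0 ↔ ∀ y, q true y * q false y = 0 := by
  rw [bhat_eq_tsum, tsum_eq_zero_iff_of_nonneg (fun y ↦ by positivity)
    (summable_two_mul_sqrt hq hY)]
  exact forall_congr' fun y ↦ by
    rw [mul_eq_zero_iff_left two_ne_zero, sqrt_eq_zero (mul_nonneg (hq _ y) (hq _ y))]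

theorem condEnt_eq_one_iff (hq : ∀ x y, 0 ≤ q x y)
    (hY : HasSum (fun y ↦ q true y + q false y) 1) :
    condEnt q = 1 ↔ ∀ y, q true y = q false y := by
  rw [condEnt_bool, ← hY.tsum_eq, tsum_eq_tsum_iff_of_le
    (fun y ↦ pairEntropy.le_add (hq _ y) (hq _ y)) (summable_pairEntropy hq hY.summable)
    hY.summable]
  exact forall_congr' fun y ↦ pairEntropy.eq_add_iff (hq _ y) (hq _ y)

theorem bhat_eq_one_iff (hq : ∀ x y, 0 ≤ q x y)
    (hY : HasSum (fun y ↦ q true y + q false y) 1) :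
    bhat q = 1 ↔ ∀ y, q true y = q false y := by
  rw [bhat_eq_tsum, ← hY.tsum_eq, tsum_eq_tsum_iff_of_le
    (fun y ↦ two_mul_sqrt_mul_le_add (hq _ y) (hq _ y)) (summable_two_mul_sqrt hq hY.summable)
    hY.summable]
  exact forall_congr' fun y ↦ two_mul_sqrt_mul_eq_add_iff (hq _ y) (hq _ y)

end BinarySource

/-- `Z(X|Y) = 0 ↔ H(X|Y) = 0` and `Z(X|Y) = 1 ↔ H(X|Y) = 1`. -/
theorem stmt15 (p : Bool → ℕ → ℝ) (hp : ∀ x y, 0 ≤ p x y)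
    (hsum : HasSum (fun z : Bool × ℕ => p z.1 z.2) 1) :
    (bhat p = 0 ↔ condEnt p = 0) ∧ (bhat p = 1 ↔ condEnt p = 1) := by
  have hY := hsum.bool_fiberwise
  rw [bhat_eq_zero_iff hp hY.summable, condEnt_eq_zero_iff hp hY.summable,
    bhat_eq_one_iff hp hY, condEnt_eq_one_iff hp hY]
  exact ⟨.rfl, .rfl⟩
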